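/- Let a₊, a₋ ∈ (0,2) with a₊ ≠ 1 and a₋ ≠ 1, let C₊, C₋ > 0, and let λ₊, λ₋, λ̃₊, λ̃₋ > 0. Then ∫_0^∞ ((λ̃₊-λ₊)·x·e^{-λ₊x} - e^{-λ₊x} + e^{-λ̃₊x})·C₊·x^{-1-a₊} dx + ∫_0^∞ ((λ̃₋-λ₋)·y·e^{-λ₋y} - e^{-λ₋y} + e^{-λ̃₋y})·C₋·y^{-1-a₋} dy = C₊·Γ(-a₊)·((a₊-1)·λ₊^{a₊} - a₊·λ̃₊·λ₊^{a₊-1} + λ̃₊^{a₊}) + C₋·Γ(-a₋)·((a₋-1)·λ₋^{a₋} - a₋·λ̃₋·λ₋^{a₋-1} + λ̃₋^{a₋}), where Γ denotes the real Gamma function and powers are real powers. Consequently, the Kullback–Leibler divergence between two generalized tempered stable processes with these parameters and horizon T > 0 equals T times the right-hand side. -/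

import Mathlib

/-!
Write `f = klIntegrand l l'`. It vanishes to second order at `0` and decays exponentially, so
integrating by parts twice against `x ^ (-1 - a)` gives
`∫ f x * x ^ (-1 - a) = (∫ f'' x * x ^ (1 - a)) / (a * (a - 1))`.
Now `f''` is a combination of `x ^ k * exp (-(b * x))`, whose integrals against `x ^ (1 - a)` are
Gamma values, and `Γ(2 - a) = a * (a - 1) * Γ(-a)` brings everything to `Γ(-a)`.
-/

open Real Filter Topology MeasureTheory

open Set

theorem exists_abs_le_mul_sq_of_hasDerivAt {f f' f'' : ℝ → ℝ}
    (hf : ∀ x, HasDerivAt f (f' x) x) (hf' : ∀ x, HasDerivAt f' (f'' x) x)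
    (hf'' : Continuous f'') (h₀ : f 0 = 0) (h₀' : f' 0 = 0) :
    ∃ M, ∀ x ∈ Icc (0 : ℝ) 1, |f' x| ≤ M * x ∧ |f x| ≤ M * x ^ 2 := by
  obtain ⟨M, hM⟩ :=
    isCompact_Icc.exists_bound_of_continuousOn (hf''.continuousOn (s := Icc (0 : ℝ) 1))
  have hM₀ : 0 ≤ M := (norm_nonneg _).trans (hM 0 (left_mem_Icc.2 zero_le_one))
  have hderiv_le : ∀ x ∈ Icc (0 : ℝ) 1, |f' x| ≤ M * x := fun x hx => by
    simpa [h₀'] using norm_image_sub_le_of_norm_deriv_le_segment'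
      (fun t _ => (hf' t).hasDerivWithinAt) (fun t ht => hM t (Ico_subset_Icc_self ht)) x hx
  refine ⟨M, fun x hx => ⟨hderiv_le x hx, ?_⟩⟩
  have hbound : ∀ t ∈ Ico 0 x, ‖f' t‖ ≤ M * x := fun t ht =>
    (hderiv_le t ⟨ht.1, ht.2.le.trans hx.2⟩).trans (by gcongr; exact ht.2.le)
  simpa [h₀, sq, mul_assoc] using norm_image_sub_le_of_norm_deriv_le_segment'
    (fun t _ => (hf t).hasDerivWithinAt) hbound x (right_mem_Icc.2 hx.1)

theorem tendsto_nhdsGT_zero_of_abs_le_mul_rpow {g : ℝ → ℝ} {M c : ℝ} (hc : 0 < c)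
    (hg : ∀ x ∈ Ioc (0 : ℝ) 1, |g x| ≤ M * x ^ c) : Tendsto g (𝓝[>] 0) (𝓝 0) := by
  have hlim : Tendsto (fun x : ℝ => M * x ^ c) (𝓝[>] 0) (𝓝 0) := by
    simpa [zero_rpow hc.ne'] using
      ((continuousAt_rpow_const 0 c (Or.inr hc.le)).tendsto.const_mul M).mono_left
        nhdsWithin_le_nhds
  refine squeeze_zero_norm' ?_ hlim
  filter_upwards [Ioc_mem_nhdsGT zero_lt_one] with x hx using hg x hx

theorem integral_mul_rpow_neg_one_sub_eq_of_hasDerivAt {f f' f'' : ℝ → ℝ} {a : ℝ}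
    (ha₀ : a ≠ 0) (ha₁ : a ≠ 1)
    (hf : ∀ x ∈ Ioi 0, HasDerivAt f (f' x) x) (hf' : ∀ x ∈ Ioi 0, HasDerivAt f' (f'' x) x)
    (hint : IntegrableOn (fun x => f x * x ^ (-1 - a)) (Ioi 0))
    (hint'' : IntegrableOn (fun x => f'' x * x ^ (1 - a)) (Ioi 0))
    (h_zero : Tendsto (fun x => f x * x ^ (-a)) (𝓝[>] 0) (𝓝 0))
    (h_zero' : Tendsto (fun x => f' x * x ^ (1 - a)) (𝓝[>] 0) (𝓝 0))
    (h_infty : Tendsto (fun x => f x * x ^ (-a)) atTop (𝓝 0))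
    (h_infty' : Tendsto (fun x => f' x * x ^ (1 - a)) atTop (𝓝 0)) :
    ∫ x in Ioi 0, f x * x ^ (-1 - a) = (∫ x in Ioi 0, f'' x * x ^ (1 - a)) / (a * (a - 1)) := by
  have ha₁' : 1 - a ≠ 0 := sub_ne_zero.2 (Ne.symm ha₁)
  set W : ℝ → ℝ := fun x => (f' x * x ^ (1 - a) / (1 - a) - f x * x ^ (-a)) / a
  -- `W 0 = 0` only through the convention `0 ^ p = 0` for `p ≠ 0`
  have hW₀ : W 0 = 0 := by simp [W, zero_rpow ha₁', zero_rpow (neg_ne_zero.2 ha₀)]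
  have hW : ∀ x ∈ Ioi (0 : ℝ),
      HasDerivAt W (f x * x ^ (-1 - a) + f'' x * x ^ (1 - a) / (a * (1 - a))) x := by
    intro x hx
    have hx₀ : x ≠ 0 := ne_of_gt hx
    refine (((((hf' x hx).mul (hasDerivAt_rpow_const (p := 1 - a) (Or.inl hx₀))).div_const
      (1 - a)).sub ((hf x hx).mul (hasDerivAt_rpow_const (p := -a) (Or.inl hx₀)))).div_const
      a).congr_deriv ?_
    rw [show 1 - a - 1 = -a by ring, show -a - 1 = -1 - a by ring]
    field_simp
    ring
  have hcont : ContinuousWithinAt W (Ici 0) 0 := by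
    rw [← continuousWithinAt_Ioi_iff_Ici, ContinuousWithinAt, hW₀]
    simpa using ((h_zero'.div_const (1 - a)).sub h_zero).div_const a
  have hlim : Tendsto W atTop (𝓝 0) := by
    simpa using ((h_infty'.div_const (1 - a)).sub h_infty).div_const a
  have hFTC := integral_Ioi_of_hasDerivAt_of_tendsto hcont hW (hint.add (hint''.div_const _)) hlim
  rw [hW₀, sub_zero, integral_add hint (hint''.div_const _), integral_div] at hFTC
  rw [eq_div_iff (mul_ne_zero ha₀ (sub_ne_zero.2 ha₁))]
  field_simp at hFTC
  linarith

theorem hasDerivAt_exp_neg_mul (c x : ℝ) :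
    HasDerivAt (fun x => exp (-(c * x))) (-c * exp (-(c * x))) x := by
  simpa [mul_comm] using ((hasDerivAt_id x).const_mul c).neg.exp

theorem tendsto_rpow_mul_exp_neg_mul_atTop_nhds_zero' (s : ℝ) {b : ℝ} (hb : 0 < b) :
    Tendsto (fun x : ℝ => x ^ s * exp (-(b * x))) atTop (𝓝 0) := by
  simpa using tendsto_rpow_mul_exp_neg_mul_atTop_nhds_zero s b hb

theorem integrableOn_rpow_mul_exp_neg_mul_Ioi {s b : ℝ} (hs : -1 < s) (hb : 0 < b) :
    IntegrableOn (fun x : ℝ => x ^ s * exp (-(b * x))) (Ioi 0) := by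
  simpa using integrableOn_rpow_mul_exp_neg_mul_rpow hs one_pos hb

theorem integral_rpow_mul_exp_neg_mul_Ioi' {s b : ℝ} (hs : -1 < s) (hb : 0 < b) :
    ∫ x in Ioi 0, x ^ s * exp (-(b * x)) = Gamma (s + 1) / b ^ (s + 1) := by
  rw [← add_sub_cancel_right s 1, integral_rpow_mul_exp_neg_mul_Ioi (by linarith) hb, one_div,
    inv_rpow hb.le, add_sub_cancel_right]
  ring

/-- The first-order Taylor remainder at `l` of `μ ↦ exp (-(μ * x))`, evaluated at `l'`. -/
noncomputable def klIntegrand (l l' x : ℝ) : ℝ :=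
  (l' - l) * x * exp (-(l * x)) - exp (-(l * x)) + exp (-(l' * x))

noncomputable def klIntegrandDeriv (l l' x : ℝ) : ℝ :=
  l' * exp (-(l * x)) - l * (l' - l) * x * exp (-(l * x)) - l' * exp (-(l' * x))

noncomputable def klIntegrandDeriv2 (l l' x : ℝ) : ℝ :=
  -(l * (2 * l' - l)) * exp (-(l * x)) + l ^ 2 * (l' - l) * x * exp (-(l * x))
    + l' ^ 2 * exp (-(l' * x))

section klIntegrand

variable {l l' a x : ℝ}

theorem hasDerivAt_klIntegrand (l l' x : ℝ) :
    HasDerivAt (klIntegrand l l') (klIntegrandDeriv l l' x) x := by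
  have hl := hasDerivAt_exp_neg_mul l x
  refine ((((hasDerivAt_id x).const_mul (l' - l)).mul hl).sub hl
    |>.add (hasDerivAt_exp_neg_mul l' x)).congr_deriv ?_
  simp only [klIntegrandDeriv, id]
  ring

theorem hasDerivAt_klIntegrandDeriv (l l' x : ℝ) :
    HasDerivAt (klIntegrandDeriv l l') (klIntegrandDeriv2 l l' x) x := by
  have hl := hasDerivAt_exp_neg_mul l x
  refine (((hl.const_mul l').sub (((hasDerivAt_id x).const_mul (l * (l' - l))).mul hl)).sub
    ((hasDerivAt_exp_neg_mul l' x).const_mul l')).congr_deriv ?_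
  simp only [klIntegrandDeriv2, id]
  ring

theorem klIntegrand_mul_rpow (hx : 0 < x) (s : ℝ) :
    klIntegrand l l' x * x ^ s = (l' - l) * (x ^ (s + 1) * exp (-(l * x)))
      - x ^ s * exp (-(l * x)) + x ^ s * exp (-(l' * x)) := by
  rw [rpow_add_one hx.ne', klIntegrand]
  ring

theorem klIntegrandDeriv_mul_rpow (hx : 0 < x) (s : ℝ) :
    klIntegrandDeriv l l' x * x ^ s = l' * (x ^ s * exp (-(l * x)))
      - l * (l' - l) * (x ^ (s + 1) * exp (-(l * x))) - l' * (x ^ s * exp (-(l' * x))) := by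
  rw [rpow_add_one hx.ne', klIntegrandDeriv]
  ring

theorem klIntegrandDeriv2_mul_rpow (hx : 0 < x) (s : ℝ) :
    klIntegrandDeriv2 l l' x * x ^ s = -(l * (2 * l' - l)) * (x ^ s * exp (-(l * x)))
      + l ^ 2 * (l' - l) * (x ^ (s + 1) * exp (-(l * x)))
      + l' ^ 2 * (x ^ s * exp (-(l' * x))) := by
  rw [rpow_add_one hx.ne', klIntegrandDeriv2]
  ring

theorem tendsto_klIntegrand_mul_rpow_atTop (hl : 0 < l) (hl' : 0 < l') (s : ℝ) :
    Tendsto (fun x => klIntegrand l l' x * x ^ s) atTop (𝓝 0) := by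
  have h := ((tendsto_rpow_mul_exp_neg_mul_atTop_nhds_zero' (s + 1) hl).const_mul (l' - l)).sub
    (tendsto_rpow_mul_exp_neg_mul_atTop_nhds_zero' s hl)
    |>.add (tendsto_rpow_mul_exp_neg_mul_atTop_nhds_zero' s hl')
  rw [mul_zero, sub_zero, add_zero] at h
  refine h.congr' ?_
  filter_upwards [eventually_gt_atTop 0] with x hx using (klIntegrand_mul_rpow hx s).symm

theorem tendsto_klIntegrandDeriv_mul_rpow_atTop (hl : 0 < l) (hl' : 0 < l') (s : ℝ) :
    Tendsto (fun x => klIntegrandDeriv l l' x * x ^ s) atTop (𝓝 0) := by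
  have h := ((tendsto_rpow_mul_exp_neg_mul_atTop_nhds_zero' s hl).const_mul l').sub
    ((tendsto_rpow_mul_exp_neg_mul_atTop_nhds_zero' (s + 1) hl).const_mul (l * (l' - l)))
    |>.sub ((tendsto_rpow_mul_exp_neg_mul_atTop_nhds_zero' s hl').const_mul l')
  rw [mul_zero, mul_zero, sub_zero, sub_zero] at h
  refine h.congr' ?_
  filter_upwards [eventually_gt_atTop 0] with x hx using (klIntegrandDeriv_mul_rpow hx s).symm

theorem exists_abs_klIntegrand_le (l l' : ℝ) :
    ∃ M, ∀ x ∈ Icc (0 : ℝ) 1,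
      |klIntegrandDeriv l l' x| ≤ M * x ∧ |klIntegrand l l' x| ≤ M * x ^ 2 :=
  exists_abs_le_mul_sq_of_hasDerivAt (hasDerivAt_klIntegrand l l')
    (hasDerivAt_klIntegrandDeriv l l') (by unfold klIntegrandDeriv2; fun_prop)
    (by simp [klIntegrand]) (by simp [klIntegrandDeriv])

theorem tendsto_klIntegrand_mul_rpow_nhdsGT_zero (ha : a < 2) (l l' : ℝ) :
    Tendsto (fun x => klIntegrand l l' x * x ^ (-a)) (𝓝[>] 0) (𝓝 0) := by
  obtain ⟨M, hM⟩ := exists_abs_klIntegrand_le l l'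
  refine tendsto_nhdsGT_zero_of_abs_le_mul_rpow (M := M) (sub_pos.2 ha) fun x hx => ?_
  calc |klIntegrand l l' x * x ^ (-a)| = |klIntegrand l l' x| * x ^ (-a) := by
        rw [abs_mul, abs_of_pos (rpow_pos_of_pos hx.1 _)]
    _ ≤ M * x ^ 2 * x ^ (-a) :=
        mul_le_mul_of_nonneg_right (hM x (Ioc_subset_Icc_self hx)).2 (rpow_pos_of_pos hx.1 _).le
    _ = M * x ^ (2 - a) := by
        rw [mul_assoc, ← rpow_natCast, ← rpow_add hx.1, Nat.cast_ofNat, ← sub_eq_add_neg]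

theorem tendsto_klIntegrandDeriv_mul_rpow_nhdsGT_zero (ha : a < 2) (l l' : ℝ) :
    Tendsto (fun x => klIntegrandDeriv l l' x * x ^ (1 - a)) (𝓝[>] 0) (𝓝 0) := by
  obtain ⟨M, hM⟩ := exists_abs_klIntegrand_le l l'
  refine tendsto_nhdsGT_zero_of_abs_le_mul_rpow (M := M) (sub_pos.2 ha) fun x hx => ?_
  calc |klIntegrandDeriv l l' x * x ^ (1 - a)| = |klIntegrandDeriv l l' x| * x ^ (1 - a) := by
        rw [abs_mul, abs_of_pos (rpow_pos_of_pos hx.1 _)]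
    _ ≤ M * x * x ^ (1 - a) :=
        mul_le_mul_of_nonneg_right (hM x (Ioc_subset_Icc_self hx)).1 (rpow_pos_of_pos hx.1 _).le
    _ = M * x ^ (2 - a) := by
        rw [mul_assoc, mul_comm x, ← rpow_add_one hx.1.ne']
        ring_nf

theorem integrableOn_klIntegrand_mul_rpow (ha : -1 ≤ a) (ha₂ : a < 2) (hl : 0 < l)
    (hl' : 0 < l') :
    IntegrableOn (fun x => klIntegrand l l' x * x ^ (-1 - a)) (Ioi 0) := by
  have hcont : ContinuousOn (fun x => klIntegrand l l' x * x ^ (-1 - a)) (Ioi 0) :=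
    ((hasDerivAt_klIntegrand l l' · |>.continuousAt) |> continuous_iff_continuousAt.2
      |>.continuousOn).mul (continuousOn_id.rpow_const fun x hx => Or.inl (ne_of_gt hx))
  rw [← Ioc_union_Ioi_eq_Ioi zero_le_one, integrableOn_union]
  constructor
  · obtain ⟨M, hM⟩ := exists_abs_klIntegrand_le l l'
    have hdom : IntegrableOn (fun x : ℝ => M * x ^ (1 - a)) (Ioc 0 1) :=
      ((intervalIntegral.intervalIntegrable_rpow' (by linarith)).const_mul M).1
    refine hdom.mono' ((hcont.mono Ioc_subset_Ioi_self).aestronglyMeasurable measurableSet_Ioc) ?_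
    filter_upwards [ae_restrict_mem measurableSet_Ioc] with x hx
    calc ‖klIntegrand l l' x * x ^ (-1 - a)‖ = |klIntegrand l l' x| * x ^ (-1 - a) := by
          rw [norm_mul, norm_of_nonneg (rpow_pos_of_pos hx.1 _).le, norm_eq_abs]
      _ ≤ M * x ^ 2 * x ^ (-1 - a) :=
          mul_le_mul_of_nonneg_right (hM x (Ioc_subset_Icc_self hx)).2 (rpow_pos_of_pos hx.1 _).le
      _ = M * x ^ (1 - a) := by
          rw [mul_assoc, ← rpow_natCast, ← rpow_add hx.1]
          ring_nf
  · have hf : IntegrableOn (klIntegrand l l') (Ioi 1) := by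
      refine IntegrableOn.mono_set ?_ (Ioi_subset_Ioi zero_le_one)
      have h := (((integrableOn_rpow_mul_exp_neg_mul_Ioi (s := 1) (by norm_num) hl).const_mul
        (l' - l)).sub (integrableOn_rpow_mul_exp_neg_mul_Ioi (s := 0) (by norm_num) hl)).add
        (integrableOn_rpow_mul_exp_neg_mul_Ioi (s := 0) (by norm_num) hl')
      refine IntegrableOn.congr_fun h (fun x _ => ?_) measurableSet_Ioi
      simp only [Pi.add_apply, Pi.sub_apply, rpow_one, rpow_zero, klIntegrand]
      ring
    refine hf.mul_bdd (c := 1) ((continuousOn_id.rpow_const fun x hx =>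
      Or.inl (ne_of_gt (zero_lt_one.trans hx))).aestronglyMeasurable measurableSet_Ioi) ?_
    filter_upwards [ae_restrict_mem measurableSet_Ioi] with x hx
    rw [norm_of_nonneg (rpow_pos_of_pos (zero_lt_one.trans hx) _).le]
    exact rpow_le_one_of_one_le_of_nonpos (le_of_lt hx) (by linarith)

theorem integrableOn_klIntegrandDeriv2_mul_rpow {s : ℝ} (hs : -1 < s) (hl : 0 < l)
    (hl' : 0 < l') :
    IntegrableOn (fun x => klIntegrandDeriv2 l l' x * x ^ s) (Ioi 0) := by
  have h := (((integrableOn_rpow_mul_exp_neg_mul_Ioi hs hl).const_mul (-(l * (2 * l' - l)))).add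
    ((integrableOn_rpow_mul_exp_neg_mul_Ioi (by linarith : -1 < s + 1) hl).const_mul
      (l ^ 2 * (l' - l)))).add ((integrableOn_rpow_mul_exp_neg_mul_Ioi hs hl').const_mul (l' ^ 2))
  exact IntegrableOn.congr_fun h (fun x hx => (klIntegrandDeriv2_mul_rpow hx s).symm)
    measurableSet_Ioi

theorem integral_klIntegrandDeriv2_mul_rpow {s : ℝ} (hs : -1 < s) (hl : 0 < l) (hl' : 0 < l') :
    ∫ x in Ioi 0, klIntegrandDeriv2 l l' x * x ^ s =
      -(l * (2 * l' - l)) * (Gamma (s + 1) / l ^ (s + 1))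
        + l ^ 2 * (l' - l) * (Gamma (s + 1 + 1) / l ^ (s + 1 + 1))
        + l' ^ 2 * (Gamma (s + 1) / l' ^ (s + 1)) := by
  have hs' : -1 < s + 1 := by linarith
  have h₁ := (integrableOn_rpow_mul_exp_neg_mul_Ioi hs hl).const_mul (-(l * (2 * l' - l)))
  have h₂ := (integrableOn_rpow_mul_exp_neg_mul_Ioi hs' hl).const_mul (l ^ 2 * (l' - l))
  have h₃ := (integrableOn_rpow_mul_exp_neg_mul_Ioi hs hl').const_mul (l' ^ 2)
  rw [setIntegral_congr_fun measurableSet_Ioi (fun x hx => klIntegrandDeriv2_mul_rpow hx s),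
    integral_add _ h₃, integral_add h₁ h₂, integral_const_mul, integral_const_mul,
    integral_const_mul, integral_rpow_mul_exp_neg_mul_Ioi' hs hl,
    integral_rpow_mul_exp_neg_mul_Ioi' hs' hl, integral_rpow_mul_exp_neg_mul_Ioi' hs hl']
  exact h₁.add h₂

theorem integral_klIntegrand_mul_rpow (ha₀ : 0 < a) (ha₂ : a < 2) (ha₁ : a ≠ 1) (hl : 0 < l)
    (hl' : 0 < l') :
    ∫ x in Ioi 0, klIntegrand l l' x * x ^ (-1 - a) =
      Gamma (-a) * ((a - 1) * l ^ a - a * l' * l ^ (a - 1) + l' ^ a) := by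
  rw [integral_mul_rpow_neg_one_sub_eq_of_hasDerivAt ha₀.ne' ha₁
    (fun x _ => hasDerivAt_klIntegrand l l' x)
    (fun x _ => hasDerivAt_klIntegrandDeriv l l' x)
    (integrableOn_klIntegrand_mul_rpow (by linarith) ha₂ hl hl')
    (integrableOn_klIntegrandDeriv2_mul_rpow (by linarith) hl hl')
    (tendsto_klIntegrand_mul_rpow_nhdsGT_zero ha₂ l l')
    (tendsto_klIntegrandDeriv_mul_rpow_nhdsGT_zero ha₂ l l')
    (tendsto_klIntegrand_mul_rpow_atTop hl hl' _)
    (tendsto_klIntegrandDeriv_mul_rpow_atTop hl hl' _),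
    integral_klIntegrandDeriv2_mul_rpow (by linarith) hl hl']
  have hΓ₂ : Gamma (1 - a + 1) = a * (a - 1) * Gamma (-a) := by
    rw [Gamma_add_one (sub_ne_zero.2 (Ne.symm ha₁)), show 1 - a = -a + 1 by ring,
      Gamma_add_one (neg_ne_zero.2 ha₀.ne')]
    ring
  have hΓ₃ : Gamma (1 - a + 1 + 1) = (2 - a) * (a * (a - 1) * Gamma (-a)) := by
    rw [Gamma_add_one (by linarith), hΓ₂]
    ring
  have hpow : ∀ {b : ℝ}, 0 < b → ∀ n : ℕ, b ^ ((n : ℝ) - a) = b ^ n / b ^ a :=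
    fun hb n => by rw [rpow_sub hb, rpow_natCast]
  rw [hΓ₃, hΓ₂, show 1 - a + 1 + 1 = ((3 : ℕ) : ℝ) - a by push_cast; ring,
    show 1 - a + 1 = ((2 : ℕ) : ℝ) - a by push_cast; ring, hpow hl, hpow hl, hpow hl',
    rpow_sub_one hl.ne']
  have := rpow_pos_of_pos hl a
  have := rpow_pos_of_pos hl' a
  field_simp
  ring

end klIntegrand

theorem gts_kl_divergence_eval_general
    (ap am Cp Cm lp lm ltp ltm T : ℝ)
    (hap : ap ∈ Set.Ioo (0 : ℝ) 2) (hap1 : ap ≠ 1)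
    (ham : am ∈ Set.Ioo (0 : ℝ) 2) (ham1 : am ≠ 1)
    (hlp : 0 < lp) (hlm : 0 < lm) (hltp : 0 < ltp) (hltm : 0 < ltm) :
    (∫ x in Set.Ioi (0 : ℝ),
        ((ltp - lp) * x * Real.exp (-(lp * x)) - Real.exp (-(lp * x))
          + Real.exp (-(ltp * x))) * (Cp * x ^ (-1 - ap)))
      + (∫ y in Set.Ioi (0 : ℝ),
          ((ltm - lm) * y * Real.exp (-(lm * y)) - Real.exp (-(lm * y))
            + Real.exp (-(ltm * y))) * (Cm * y ^ (-1 - am)))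
      = Cp * Real.Gamma (-ap) *
            ((ap - 1) * lp ^ ap - ap * ltp * lp ^ (ap - 1) + ltp ^ ap)
        + Cm * Real.Gamma (-am) *
            ((am - 1) * lm ^ am - am * ltm * lm ^ (am - 1) + ltm ^ am) ∧
    T * ((∫ x in Set.Ioi (0 : ℝ),
          ((ltp - lp) * x * Real.exp (-(lp * x)) - Real.exp (-(lp * x))
            + Real.exp (-(ltp * x))) * (Cp * x ^ (-1 - ap)))
        + (∫ y in Set.Ioi (0 : ℝ),
            ((ltm - lm) * y * Real.exp (-(lm * y)) - Real.exp (-(lm * y))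
              + Real.exp (-(ltm * y))) * (Cm * y ^ (-1 - am))))
      = T * (Cp * Real.Gamma (-ap) *
              ((ap - 1) * lp ^ ap - ap * ltp * lp ^ (ap - 1) + ltp ^ ap)
            + Cm * Real.Gamma (-am) *
                ((am - 1) * lm ^ am - am * ltm * lm ^ (am - 1) + ltm ^ am)) := by
  have key : ∀ {a l l' C : ℝ}, a ∈ Ioo 0 2 → a ≠ 1 → 0 < l → 0 < l' →
      ∫ x in Ioi 0, klIntegrand l l' x * (C * x ^ (-1 - a)) =
        C * Gamma (-a) * ((a - 1) * l ^ a - a * l' * l ^ (a - 1) + l' ^ a) := by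
    intro a l l' C ha ha₁ hl hl'
    simp_rw [mul_left_comm _ C, integral_const_mul]
    rw [integral_klIntegrand_mul_rpow ha.1 ha.2 ha₁ hl hl']
    ring
  have hsum :=
    congrArg₂ (· + ·) (key (C := Cp) hap hap1 hlp hltp) (key (C := Cm) ham ham1 hlm hltm)
  exact ⟨hsum, congrArg (T * ·) hsum⟩

/-- Evaluation of the Kullback–Leibler integral for two generalized tempered
stable processes, and the resulting Kullback–Leibler divergence (`T` times the
evaluated integral) on horizon `T`. -/
theorem gts_kl_divergence_eval
    (ap am Cp Cm lp lm ltp ltm T : ℝ)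
    (hap : ap ∈ Set.Ioo (0 : ℝ) 2) (hap1 : ap ≠ 1)
    (ham : am ∈ Set.Ioo (0 : ℝ) 2) (ham1 : am ≠ 1)
    (hCp : 0 < Cp) (hCm : 0 < Cm)
    (hlp : 0 < lp) (hlm : 0 < lm) (hltp : 0 < ltp) (hltm : 0 < ltm)
    (hT : 0 < T) :
    (∫ x in Set.Ioi (0 : ℝ),
        ((ltp - lp) * x * Real.exp (-(lp * x)) - Real.exp (-(lp * x))
          + Real.exp (-(ltp * x))) * (Cp * x ^ (-1 - ap)))
      + (∫ y in Set.Ioi (0 : ℝ),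
          ((ltm - lm) * y * Real.exp (-(lm * y)) - Real.exp (-(lm * y))
            + Real.exp (-(ltm * y))) * (Cm * y ^ (-1 - am)))
      = Cp * Real.Gamma (-ap) *
            ((ap - 1) * lp ^ ap - ap * ltp * lp ^ (ap - 1) + ltp ^ ap)
        + Cm * Real.Gamma (-am) *
            ((am - 1) * lm ^ am - am * ltm * lm ^ (am - 1) + ltm ^ am) ∧
    T * ((∫ x in Set.Ioi (0 : ℝ),
          ((ltp - lp) * x * Real.exp (-(lp * x)) - Real.exp (-(lp * x))
            + Real.exp (-(ltp * x))) * (Cp * x ^ (-1 - ap)))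
        + (∫ y in Set.Ioi (0 : ℝ),
            ((ltm - lm) * y * Real.exp (-(lm * y)) - Real.exp (-(lm * y))
              + Real.exp (-(ltm * y))) * (Cm * y ^ (-1 - am))))
      = T * (Cp * Real.Gamma (-ap) *
              ((ap - 1) * lp ^ ap - ap * ltp * lp ^ (ap - 1) + ltp ^ ap)
            + Cm * Real.Gamma (-am) *
                ((am - 1) * lm ^ am - am * ltm * lm ^ (am - 1) + ltm ^ am)) :=
  gts_kl_divergence_eval_general ap am Cp Cm lp lm ltp ltm T hap hap1 ham ham1 hlp hlm hltp hltm
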